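/- Let ℍ := {z ∈ ℂ : Im z > 0}. There exists a universal constant C > 0 with the following property. Let Λ ⊆ ℂ be an open set and let φ : Λ → ℂ be an injective holomorphic map with φ(Λ) = ℍ. For z, w ∈ Λ define P(z) := −(1/π)·Im(1/φ(z)), Q(z) := −(1/π)·Im(1/φ(z)²), and G(w, z) := −(1/2π)·log|(φ(w) − φ(z))/(φ(w) − conj(φ(z)))|. Then P(z) > 0 for all z ∈ Λ, and for all distinct w, z ∈ Λ one has both |P(w)/P(z) − 1|·G(w, z) ≤ C and |Q(w)/P(w) − Q(z)/P(z)|·G(w, z)/P(z) ≤ C. -/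

import Mathlib

/-- Poisson kernel of `Λ` (with source at `φ⁻¹(0)`, normalized at `φ⁻¹(∞)`),
expressed through a uniformization `φ` of `Λ` onto the upper half-plane:
`P(z) = -(1/π)·Im(1/φ(z))`. -/
noncomputable def Pker (φ : ℂ → ℂ) (z : ℂ) : ℝ := -(1 / Real.pi) * ((φ z)⁻¹).im

/-- Derivative of the Poisson kernel with respect to the source point:
`Q(z) = -(1/π)·Im(1/φ(z)²)`. -/
noncomputable def Qker (φ : ℂ → ℂ) (z : ℂ) : ℝ := -(1 / Real.pi) * (((φ z) ^ 2)⁻¹).im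

/-- Green function of `Λ` expressed through a uniformization `φ` of `Λ` onto the upper
half-plane: `G(w,z) = -(1/2π)·log|(φ(w) - φ(z))/(φ(w) - conj(φ(z)))|`. -/
noncomputable def Gker (φ : ℂ → ℂ) (w z : ℂ) : ℝ :=
  -(1 / (2 * Real.pi)) *
    Real.log ‖(φ w - φ z) / (φ w - (starRingEnd ℂ) (φ z))‖

/-!
For `u, v` in the upper half-plane put `D = ‖u - conj v‖` and `r = ‖u - v‖`. Then
`D² - r² = 4 Im u Im v`, the Green function is `(1/2π) log (D/r) ≤ (D - r)/(2π r)`, and the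
triangle inequality applied to `(u - conj u) v = u (v - conj u) + conj u (u - v)` gives
`(D - r) ‖v‖ ≤ 2 Im v ‖u‖`. With `P(u) = Im u / (π ‖u‖²)` and `Q(u)/P(u) = 2 Re (1/u)`, both
estimates follow from these three facts, with `C = 2`. As `Pker φ = Pker id ∘ φ` (and likewise
for `Qker`, `Gker`), only points of the upper half-plane matter.
-/

open ComplexConjugate

lemma Pker_id_eq (u : ℂ) : Pker id u = u.im / (Real.pi * Complex.normSq u) := by
  simp only [Pker, id, Complex.inv_im]
  ring

lemma Pker_id_pos {u : ℂ} (hu : 0 < u.im) : 0 < Pker id u := by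
  have : 0 < Complex.normSq u := Complex.normSq_pos.2 (by rintro rfl; simp at hu)
  rw [Pker_id_eq]
  positivity

lemma Qker_id_div_Pker_id {u : ℂ} (hu : u.im ≠ 0) : Qker id u / Pker id u = 2 * (u⁻¹).re := by
  have hn : Complex.normSq u ≠ 0 := (Complex.normSq_pos.2 (by rintro rfl; simp at hu)).ne'
  have him : (u ^ 2).im = 2 * u.re * u.im := by
    simp only [pow_two, Complex.mul_im]; ring
  simp only [Qker, Pker, id, Complex.inv_im, Complex.inv_re, him, map_pow]
  field_simp

lemma norm_sub_conj_sq_sub_norm_sub_sq (u v : ℂ) :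
    ‖u - conj v‖ ^ 2 - ‖u - v‖ ^ 2 = 4 * u.im * v.im := by
  simp only [Complex.sq_norm, Complex.normSq_apply, Complex.sub_re, Complex.sub_im,
    Complex.conj_re, Complex.conj_im]
  ring

lemma norm_sub_conj_comm (u v : ℂ) : ‖v - conj u‖ = ‖u - conj v‖ := by
  rw [← Complex.norm_conj, map_sub, Complex.conj_conj, norm_sub_rev]

lemma two_mul_abs_im_mul_norm_le (u v : ℂ) :
    2 * |u.im| * ‖v‖ ≤ ‖u‖ * (‖u - conj v‖ + ‖u - v‖) := calc
  2 * |u.im| * ‖v‖ = ‖(u - conj u) * v‖ := by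
    rw [norm_mul, Complex.sub_conj, norm_mul, Complex.norm_real, Complex.norm_I,
      Real.norm_eq_abs, abs_mul, abs_two, mul_one]
  _ = ‖u * (v - conj u) + conj u * (u - v)‖ := by ring_nf
  _ ≤ ‖u * (v - conj u)‖ + ‖conj u * (u - v)‖ := norm_add_le _ _
  _ = ‖u‖ * (‖u - conj v‖ + ‖u - v‖) := by
    rw [norm_mul, norm_mul, Complex.norm_conj, norm_sub_conj_comm]; ring

lemma abs_Qker_id_div_Pker_id_sub_le {u v : ℂ} (hu : u.im ≠ 0) (hv : v.im ≠ 0) :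
    |Qker id u / Pker id u - Qker id v / Pker id v| ≤ 2 * ‖u - v‖ / (‖u‖ * ‖v‖) := by
  have hu0 : u ≠ 0 := by rintro rfl; simp at hu
  have hv0 : v ≠ 0 := by rintro rfl; simp at hv
  calc |Qker id u / Pker id u - Qker id v / Pker id v| = 2 * |(u⁻¹ - v⁻¹).re| := by
        rw [Qker_id_div_Pker_id hu, Qker_id_div_Pker_id hv, Complex.sub_re, ← mul_sub, abs_mul,
          abs_two]
    _ ≤ 2 * ‖u⁻¹ - v⁻¹‖ := by gcongr; exact Complex.abs_re_le_norm _
    _ = 2 * ‖u - v‖ / (‖u‖ * ‖v‖) := by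
        rw [inv_sub_inv hu0 hv0, norm_div, norm_mul, norm_sub_rev, mul_div_assoc]

lemma abs_sub_one_le_sub_one {x y : ℝ} (hy : 0 < y) (h₁ : y⁻¹ ≤ x) (h₂ : x ≤ y) :
    |x - 1| ≤ y - 1 := by
  have : 2 - y ≤ y⁻¹ := by
    nlinarith [mul_inv_cancel₀ hy.ne', mul_nonneg (sq_nonneg (y - 1)) (inv_pos.2 hy).le]
  rw [abs_le]
  constructor <;> linarith

section UpperHalfPlane

variable {u v : ℂ} (hu : 0 < u.im) (hv : 0 < v.im)
include hu hv

lemma norm_sub_lt_norm_sub_conj : ‖u - v‖ < ‖u - conj v‖ := by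
  have := norm_sub_conj_sq_sub_norm_sub_sq u v
  nlinarith [mul_pos hu hv, norm_nonneg (u - v), norm_nonneg (u - conj v)]

lemma norm_sub_conj_sub_norm_sub_mul_norm_le :
    (‖u - conj v‖ - ‖u - v‖) * ‖v‖ ≤ 2 * v.im * ‖u‖ := by
  set D := ‖u - conj v‖
  set r := ‖u - v‖
  have hrD : r < D := norm_sub_lt_norm_sub_conj hu hv
  have hsq : (D - r) * (D + r) = 4 * u.im * v.im := by
    rw [← norm_sub_conj_sq_sub_norm_sub_sq]; ring
  have key := two_mul_abs_im_mul_norm_le u v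
  rw [abs_of_pos hu] at key
  have : 2 * u.im * ((D - r) * ‖v‖) ≤ 2 * u.im * (2 * v.im * ‖u‖) := calc
    2 * u.im * ((D - r) * ‖v‖) = (D - r) * (2 * u.im * ‖v‖) := by ring
    _ ≤ (D - r) * (‖u‖ * (D + r)) := by gcongr
    _ = 2 * u.im * (2 * v.im * ‖u‖) := by linear_combination ‖u‖ * hsq
  exact le_of_mul_le_mul_left this (by positivity)

lemma Gker_id_nonneg : 0 ≤ Gker id u v := by
  have hrD := norm_sub_lt_norm_sub_conj hu hv
  have hD : 0 < ‖u - conj v‖ := (norm_nonneg _).trans_lt hrD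
  simp only [Gker, id, norm_div]
  refine mul_nonneg_of_nonpos_of_nonpos (neg_nonpos.2 (by positivity)) ?_
  exact Real.log_nonpos (by positivity) ((div_le_one hD).2 hrD.le)

lemma Gker_id_le (huv : u ≠ v) :
    Gker id u v ≤ (‖u - conj v‖ / ‖u - v‖ - 1) / (2 * Real.pi) := by
  have hr : 0 < ‖u - v‖ := norm_pos_iff.2 (sub_ne_zero.2 huv)
  have hD : 0 < ‖u - conj v‖ := hr.trans (norm_sub_lt_norm_sub_conj hu hv)
  have hlog := Real.one_sub_inv_le_log_of_pos (div_pos hr hD)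
  rw [inv_div] at hlog
  simp only [Gker, id, norm_div]
  rw [neg_mul, one_div_mul_eq_div, ← neg_div]
  gcongr
  linarith

lemma Pker_id_div_Pker_id_le :
    Pker id u / Pker id v ≤ (‖u - conj v‖ + ‖u - v‖) / (‖u - conj v‖ - ‖u - v‖) := by
  set D := ‖u - conj v‖
  set r := ‖u - v‖
  have hrD : 0 < D - r := sub_pos.2 (norm_sub_lt_norm_sub_conj hu hv)
  have hsq : (D - r) * (D + r) = 4 * u.im * v.im := by
    rw [← norm_sub_conj_sq_sub_norm_sub_sq]; ring
  have hu0 : 0 < ‖u‖ := norm_pos_iff.2 (by rintro rfl; simp at hu)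
  have hv0 : 0 < ‖v‖ := norm_pos_iff.2 (by rintro rfl; simp at hv)
  have key := norm_sub_conj_sub_norm_sub_mul_norm_le hu hv
  have key_sq : (D - r) * (u.im * ‖v‖ ^ 2 * (D - r)) ≤ (D - r) * (v.im * ‖u‖ ^ 2 * (D + r)) := calc
    (D - r) * (u.im * ‖v‖ ^ 2 * (D - r)) = u.im * ((D - r) * ‖v‖) ^ 2 := by ring
    _ ≤ u.im * (2 * v.im * ‖u‖) ^ 2 := by gcongr
    _ = (D - r) * (v.im * ‖u‖ ^ 2 * (D + r)) := by linear_combination (-v.im * ‖u‖ ^ 2) * hsq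
  rw [Pker_id_eq, Pker_id_eq, ← Complex.sq_norm, ← Complex.sq_norm,
    div_div_div_eq, div_le_div_iff₀ (by positivity) hrD, mul_comm Real.pi, mul_comm Real.pi]
  nlinarith [le_of_mul_le_mul_left key_sq hrD, Real.pi_pos]

lemma abs_Pker_id_div_sub_one_mul_Gker_id_le (huv : u ≠ v) :
    |Pker id u / Pker id v - 1| * Gker id u v ≤ 1 / Real.pi := by
  set D := ‖u - conj v‖
  set r := ‖u - v‖
  have hr : 0 < r := norm_pos_iff.2 (sub_ne_zero.2 huv)
  have hrD : 0 < D - r := sub_pos.2 (norm_sub_lt_norm_sub_conj hu hv)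
  have hlower : ((D + r) / (D - r))⁻¹ ≤ Pker id u / Pker id v := by
    have h := Pker_id_div_Pker_id_le hv hu
    rw [norm_sub_conj_comm, norm_sub_rev v u] at h
    rw [← inv_div (Pker id v)]
    exact inv_anti₀ (div_pos (Pker_id_pos hv) (Pker_id_pos hu)) h
  have habs := abs_sub_one_le_sub_one (by positivity) hlower (Pker_id_div_Pker_id_le hu hv)
  calc |Pker id u / Pker id v - 1| * Gker id u v
      ≤ ((D + r) / (D - r) - 1) * ((D / r - 1) / (2 * Real.pi)) :=
        mul_le_mul habs (Gker_id_le hu hv huv) (Gker_id_nonneg hu hv)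
          ((abs_nonneg _).trans habs)
    _ = 1 / Real.pi := by
        field_simp
        ring

lemma abs_sub_Qker_id_div_Pker_id_mul_Gker_id_div_le (huv : u ≠ v) :
    |Qker id u / Pker id u - Qker id v / Pker id v| * Gker id u v / Pker id v ≤ 2 := by
  set D := ‖u - conj v‖
  set r := ‖u - v‖
  have hr : 0 < r := norm_pos_iff.2 (sub_ne_zero.2 huv)
  have hu0 : 0 < ‖u‖ := norm_pos_iff.2 (by rintro rfl; simp at hu)
  have hv0 : 0 < ‖v‖ := norm_pos_iff.2 (by rintro rfl; simp at hv)
  have := Gker_id_nonneg hu hv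
  have := Pker_id_pos hv
  calc |Qker id u / Pker id u - Qker id v / Pker id v| * Gker id u v / Pker id v
      ≤ 2 * r / (‖u‖ * ‖v‖) * ((D / r - 1) / (2 * Real.pi)) / Pker id v := by
        gcongr
        · exact abs_Qker_id_div_Pker_id_sub_le hu.ne' hv.ne'
        · exact Gker_id_le hu hv huv
    _ = (D - r) * ‖v‖ / (v.im * ‖u‖) := by
        rw [Pker_id_eq, ← Complex.sq_norm]
        field_simp
    _ ≤ 2 := by
        rw [div_le_iff₀ (by positivity)]
        linarith [norm_sub_conj_sub_norm_sub_mul_norm_le hu hv]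

end UpperHalfPlane

theorem statement11 :
    ∃ C : ℝ, 0 < C ∧
      ∀ (Λ : Set ℂ) (φ : ℂ → ℂ), IsOpen Λ → Set.InjOn φ Λ →
        DifferentiableOn ℂ φ Λ → φ '' Λ = {z : ℂ | 0 < z.im} →
        (∀ z ∈ Λ, 0 < Pker φ z) ∧
        ∀ w ∈ Λ, ∀ z ∈ Λ, w ≠ z →
          |Pker φ w / Pker φ z - 1| * Gker φ w z ≤ C ∧
          |Qker φ w / Pker φ w - Qker φ z / Pker φ z| * Gker φ w z / Pker φ z ≤ C := by
  refine ⟨2, two_pos, fun Λ φ _ hinj _ himg => ?_⟩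
  have him : ∀ z ∈ Λ, 0 < (φ z).im := fun z hz => himg.subset (Set.mem_image_of_mem φ hz)
  have hπ : 1 / Real.pi ≤ 2 := (div_le_iff₀ Real.pi_pos).2 (by linarith [Real.pi_gt_three])
  refine ⟨fun z hz => Pker_id_pos (him z hz), fun w hw z hz hwz => ?_⟩
  have hφ : φ w ≠ φ z := fun h => hwz (hinj hw hz h)
  exact ⟨(abs_Pker_id_div_sub_one_mul_Gker_id_le (him w hw) (him z hz) hφ).trans hπ,
    abs_sub_Qker_id_div_Pker_id_mul_Gker_id_div_le (him w hw) (him z hz) hφ⟩
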